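/- Fix ρ > 0, a tensor X ∈ ℝ^{I₁×I₂×I₃}, and matrices C_n ∈ ℝ^{d_n × ∏_{j≠n} d_j} for n = 1,2,3. For column-orthonormal U, V, W and G ∈ ℝ^{d₁×d₂×d₃}, let f(G,U,V,W) = Σ_{n=1}^{3} (ρ/2)‖G_{(n)} − C_n‖²_F + (1/2)‖X − G ×₁ U ×₂ V ×₃ W‖²_F, and set A = X ×₁ Uᵀ ×₂ Vᵀ ×₃ Wᵀ, B = Σ_{n=1}^{3} refold_n(C_n). Then for every column-orthonormal U, V, W, min_G f(G,U,V,W) = c₁ − (1/(2(1+3ρ))) ‖A + ρ B‖²_F, where c₁ = (1/2)‖X‖²_F + (ρ/2) Σ_{n=1}^{3} ‖C_n‖²_F does not depend on (U,V,W). Consequently, minimizing f over G and column-orthonormal (U,V,W) is equivalent to maximizing g(U,V,W) = ‖A + ρ B‖²_F over column-orthonormal (U,V,W). -/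

import Mathlib

open scoped BigOperators
open Matrix Kronecker Filter Topology

/-- A third-order real tensor of size `I₁ × I₂ × I₃`. -/
abbrev Tensor (I₁ I₂ I₃ : ℕ) : Type := Fin I₁ → Fin I₂ → Fin I₃ → ℝ

namespace Tensor

variable {I₁ I₂ I₃ J d₁ d₂ d₃ : ℕ}

/-- The 1-mode product `X ×₁ U`. -/
noncomputable def mode1 (X : Tensor I₁ I₂ I₃) (U : Matrix (Fin J) (Fin I₁) ℝ) : Tensor J I₂ I₃ :=
  fun j i₂ i₃ => ∑ i₁, X i₁ i₂ i₃ * U j i₁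

/-- The 2-mode product `X ×₂ V`. -/
noncomputable def mode2 (X : Tensor I₁ I₂ I₃) (V : Matrix (Fin J) (Fin I₂) ℝ) : Tensor I₁ J I₃ :=
  fun i₁ j i₃ => ∑ i₂, X i₁ i₂ i₃ * V j i₂

/-- The 3-mode product `X ×₃ W`. -/
noncomputable def mode3 (X : Tensor I₁ I₂ I₃) (W : Matrix (Fin J) (Fin I₃) ℝ) : Tensor I₁ I₂ J :=
  fun i₁ i₂ j => ∑ i₃, X i₁ i₂ i₃ * W j i₃

/-- `G ×₁ U ×₂ V ×₃ W`. -/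
noncomputable def tucker (G : Tensor d₁ d₂ d₃) (U : Matrix (Fin I₁) (Fin d₁) ℝ)
    (V : Matrix (Fin I₂) (Fin d₂) ℝ) (W : Matrix (Fin I₃) (Fin d₃) ℝ) : Tensor I₁ I₂ I₃ :=
  mode3 (mode2 (mode1 G U) V) W

/-- Mode-1 unfolding `X₍₁₎`; columns are indexed by pairs `(i₃, i₂)` (with `i₂` varying fastest,
matching `j = 1 + (i₂ - 1) + (i₃ - 1)·I₂`). -/
def unfold1 (X : Tensor I₁ I₂ I₃) : Matrix (Fin I₁) (Fin I₃ × Fin I₂) ℝ :=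
  fun i₁ p => X i₁ p.2 p.1

/-- Mode-2 unfolding `X₍₂₎`; columns indexed by `(i₃, i₁)` with `i₁` fastest. -/
def unfold2 (X : Tensor I₁ I₂ I₃) : Matrix (Fin I₂) (Fin I₃ × Fin I₁) ℝ :=
  fun i₂ p => X p.2 i₂ p.1

/-- Mode-3 unfolding `X₍₃₎`; columns indexed by `(i₂, i₁)` with `i₁` fastest. -/
def unfold3 (X : Tensor I₁ I₂ I₃) : Matrix (Fin I₃) (Fin I₂ × Fin I₁) ℝ :=
  fun i₃ p => X p.2 p.1 i₃

/-- Refolding of a mode-1 unfolded matrix back into a tensor. -/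
def refold1 (M : Matrix (Fin d₁) (Fin d₃ × Fin d₂) ℝ) : Tensor d₁ d₂ d₃ :=
  fun i₁ i₂ i₃ => M i₁ (i₃, i₂)

/-- Refolding of a mode-2 unfolded matrix back into a tensor. -/
def refold2 (M : Matrix (Fin d₂) (Fin d₃ × Fin d₁) ℝ) : Tensor d₁ d₂ d₃ :=
  fun i₁ i₂ i₃ => M i₂ (i₃, i₁)

/-- Refolding of a mode-3 unfolded matrix back into a tensor. -/
def refold3 (M : Matrix (Fin d₃) (Fin d₂ × Fin d₁) ℝ) : Tensor d₁ d₂ d₃ :=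
  fun i₁ i₂ i₃ => M i₃ (i₂, i₁)

/-- Tensor inner product `⟨A, B⟩`. -/
def tinner (A B : Tensor I₁ I₂ I₃) : ℝ := ∑ i₁, ∑ i₂, ∑ i₃, A i₁ i₂ i₃ * B i₁ i₂ i₃

/-- Squared Frobenius norm `‖X‖²_F`. -/
def frobSq (X : Tensor I₁ I₂ I₃) : ℝ := ∑ i₁, ∑ i₂, ∑ i₃, (X i₁ i₂ i₃) ^ 2

/-- Frobenius norm `‖X‖_F`. -/
noncomputable def frob (X : Tensor I₁ I₂ I₃) : ℝ := Real.sqrt (frobSq X)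

/-- Hadamard (entrywise) product of tensors. -/
def hadamard (A B : Tensor I₁ I₂ I₃) : Tensor I₁ I₂ I₃ := fun i₁ i₂ i₃ => A i₁ i₂ i₃ * B i₁ i₂ i₃

/-- `P_Ω(X)`: agrees with `X` on `Ω` and is zero elsewhere. -/
def proj (Ω : Set (Fin I₁ × Fin I₂ × Fin I₃)) [DecidablePred (· ∈ Ω)] (X : Tensor I₁ I₂ I₃) :
    Tensor I₁ I₂ I₃ := fun i₁ i₂ i₃ => if (i₁, i₂, i₃) ∈ Ω then X i₁ i₂ i₃ else 0

/-- `P_Ω^⊥(X) = X - P_Ω(X)`. -/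
def projc (Ω : Set (Fin I₁ × Fin I₂ × Fin I₃)) [DecidablePred (· ∈ Ω)] (X : Tensor I₁ I₂ I₃) :
    Tensor I₁ I₂ I₃ := X - proj Ω X

/-- The 0/1 indicator tensor of an index set `Ω`. -/
def indic (Ω : Set (Fin I₁ × Fin I₂ × Fin I₃)) [DecidablePred (· ∈ Ω)] : Tensor I₁ I₂ I₃ :=
  fun i₁ i₂ i₃ => if (i₁, i₂, i₃) ∈ Ω then 1 else 0

end Tensor

namespace MatrixAux

/-- The singular values of a real matrix `M`: square roots of the eigenvalues of `MᴴM`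
(for real matrices `Mᴴ = Mᵀ`). -/
noncomputable def singularValues {m n : Type*} [Fintype m] [Fintype n] [DecidableEq n]
    (M : Matrix m n ℝ) : n → ℝ :=
  fun i => Real.sqrt ((show (Mᵀ * M).IsHermitian by
    simpa using Matrix.isHermitian_conjTranspose_mul_self M).eigenvalues i)

/-- The Schatten `p`-norm of a real matrix, `(∑ᵢ σᵢᵖ)^(1/p)`. -/
noncomputable def schattenNorm (p : ℝ) {m n : Type*} [Fintype m] [Fintype n] [DecidableEq n]
    (M : Matrix m n ℝ) : ℝ :=
  (∑ i, singularValues M i ^ p) ^ (1 / p)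

/-- The trace norm (nuclear norm) of a real matrix: the sum of its singular values. -/
noncomputable def traceNorm {m n : Type*} [Fintype m] [Fintype n] [DecidableEq n]
    (M : Matrix m n ℝ) : ℝ :=
  ∑ i, singularValues M i

/-- Squared Frobenius norm of a matrix. -/
def frobSq {m n : Type*} [Fintype m] [Fintype n] (M : Matrix m n ℝ) : ℝ := ∑ i, ∑ j, (M i j) ^ 2

/-- Frobenius norm of a matrix. -/
noncomputable def frob {m n : Type*} [Fintype m] [Fintype n] (M : Matrix m n ℝ) : ℝ :=
  Real.sqrt (frobSq M)

/-- Frobenius (trace) inner product of matrices. -/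
def minner {m n : Type*} [Fintype m] [Fintype n] (A B : Matrix m n ℝ) : ℝ :=
  ∑ i, ∑ j, A i j * B i j

end MatrixAux

/-- The Schatten `p`-norm of a third-order tensor: the average of the Schatten `p`-norms of its
three mode-`n` unfoldings. -/
noncomputable def tensorSchattenNorm (p : ℝ) {I₁ I₂ I₃ : ℕ} (X : Tensor I₁ I₂ I₃) : ℝ :=
  (MatrixAux.schattenNorm p (Tensor.unfold1 X) + MatrixAux.schattenNorm p (Tensor.unfold2 X)
    + MatrixAux.schattenNorm p (Tensor.unfold3 X)) / 3

/-!
For column-orthonormal `U, V, W` the map `G ↦ G ×₁ U ×₂ V ×₃ W` is an isometry whose adjoint is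
`X ↦ X ×₁ Uᵀ ×₂ Vᵀ ×₃ Wᵀ`: in mode-1 unfolding it reads `M ↦ U M (W ⊗ V)ᵀ`, and `W ⊗ V` is
column-orthonormal as well. Each unfolding is an isometry whose adjoint is the matching refolding.
Hence `f(·, U, V, W)` is the quadratic `(1 + 3ρ)/2 ‖G‖² - ⟨G, A + ρB⟩ + c₁`, and completing the
square gives its minimiser `(A + ρB)/(1 + 3ρ)` and minimum value `c₁ - ‖A + ρB‖²/(2(1 + 3ρ))`.
-/

namespace MatrixAux

variable {m n p : Type*} [Fintype m] [Fintype n] [Fintype p]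

lemma minner_eq_trace (A B : Matrix m n ℝ) : minner A B = trace (Aᵀ * B) := by
  simp only [minner, trace, diag, mul_apply, transpose_apply]
  exact Finset.sum_comm

lemma frobSq_eq_minner (A : Matrix m n ℝ) : frobSq A = minner A A := by
  simp only [frobSq, minner, sq]

lemma minner_mul_left (A : Matrix p n ℝ) (M : Matrix p m ℝ) (B : Matrix m n ℝ) :
    minner A (M * B) = minner (Mᵀ * A) B := by
  simp only [minner_eq_trace, transpose_mul, transpose_transpose, Matrix.mul_assoc]

lemma minner_mul_right (A : Matrix m p ℝ) (B : Matrix m n ℝ) (N : Matrix n p ℝ) :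
    minner A (B * N) = minner (A * Nᵀ) B := by
  rw [minner_eq_trace, minner_eq_trace, transpose_mul, transpose_transpose, ← Matrix.mul_assoc,
    trace_mul_cycle]

lemma frobSq_sub (A B : Matrix m n ℝ) :
    frobSq (A - B) = frobSq A - 2 * minner A B + frobSq B := by
  simp only [frobSq, minner, Matrix.sub_apply, sub_sq, Finset.sum_add_distrib,
    Finset.sum_sub_distrib, Finset.mul_sum, mul_assoc]

end MatrixAux

lemma Matrix.kronecker_transpose_mul_kronecker {R l m n p : Type*} [CommSemiring R] [Fintype l]
    [Fintype n] (A : Matrix l m R) (B : Matrix n p R) :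
    (A ⊗ₖ B)ᵀ * (A ⊗ₖ B) = (Aᵀ * A) ⊗ₖ (Bᵀ * B) := by
  rw [← kroneckerMap_transpose, mul_kronecker_mul]

namespace Tensor

variable {I₁ I₂ I₃ d₁ d₂ d₃ : ℕ}

open MatrixAux (minner minner_mul_left minner_mul_right)

lemma tinner_comm (A B : Tensor I₁ I₂ I₃) : tinner A B = tinner B A := by
  simp only [tinner, mul_comm]

lemma frobSq_eq_tinner (A : Tensor I₁ I₂ I₃) : frobSq A = tinner A A := by
  simp only [frobSq, tinner, sq]

lemma frobSq_nonneg (A : Tensor I₁ I₂ I₃) : 0 ≤ frobSq A := by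
  unfold frobSq
  positivity

lemma tinner_add_right (A B C : Tensor I₁ I₂ I₃) :
    tinner A (B + C) = tinner A B + tinner A C := by
  simp only [tinner, Pi.add_apply, mul_add, Finset.sum_add_distrib]

lemma tinner_smul_right (c : ℝ) (A B : Tensor I₁ I₂ I₃) :
    tinner A (c • B) = c * tinner A B := by
  simp only [tinner, Pi.smul_apply, smul_eq_mul, Finset.mul_sum, mul_left_comm]

lemma frobSq_smul (c : ℝ) (A : Tensor I₁ I₂ I₃) : frobSq (c • A) = c ^ 2 * frobSq A := by
  simp only [frobSq, Pi.smul_apply, smul_eq_mul, mul_pow, Finset.mul_sum]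

lemma frobSq_sub (A B : Tensor I₁ I₂ I₃) :
    frobSq (A - B) = frobSq A - 2 * tinner A B + frobSq B := by
  simp only [frobSq, tinner, Pi.sub_apply, sub_sq, Finset.sum_add_distrib,
    Finset.sum_sub_distrib, Finset.mul_sum, mul_assoc]

lemma minner_unfold1 (G : Tensor I₁ I₂ I₃) (C : Matrix (Fin I₁) (Fin I₃ × Fin I₂) ℝ) :
    minner (unfold1 G) C = tinner G (refold1 C) := by
  simp only [minner, unfold1, tinner, refold1, Fintype.sum_prod_type]
  exact Finset.sum_congr rfl fun _ _ => Finset.sum_comm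

lemma minner_unfold2 (G : Tensor I₁ I₂ I₃) (C : Matrix (Fin I₂) (Fin I₃ × Fin I₁) ℝ) :
    minner (unfold2 G) C = tinner G (refold2 C) := by
  simp only [minner, unfold2, tinner, refold2, Fintype.sum_prod_type]
  exact (Finset.sum_congr rfl fun _ _ => Finset.sum_comm).trans Finset.sum_comm

lemma minner_unfold3 (G : Tensor I₁ I₂ I₃) (C : Matrix (Fin I₃) (Fin I₂ × Fin I₁) ℝ) :
    minner (unfold3 G) C = tinner G (refold3 C) := by
  simp only [minner, unfold3, tinner, refold3, Fintype.sum_prod_type]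
  exact ((Finset.sum_congr rfl fun _ _ => Finset.sum_comm).trans Finset.sum_comm).trans
    (Finset.sum_congr rfl fun _ _ => Finset.sum_comm)

lemma frobSq_unfold1 (G : Tensor I₁ I₂ I₃) : MatrixAux.frobSq (unfold1 G) = frobSq G := by
  rw [MatrixAux.frobSq_eq_minner, minner_unfold1, frobSq_eq_tinner]
  rfl

lemma frobSq_unfold2 (G : Tensor I₁ I₂ I₃) : MatrixAux.frobSq (unfold2 G) = frobSq G := by
  rw [MatrixAux.frobSq_eq_minner, minner_unfold2, frobSq_eq_tinner]
  rfl

lemma frobSq_unfold3 (G : Tensor I₁ I₂ I₃) : MatrixAux.frobSq (unfold3 G) = frobSq G := by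
  rw [MatrixAux.frobSq_eq_minner, minner_unfold3, frobSq_eq_tinner]
  rfl

lemma tinner_eq_minner_unfold1 (G H : Tensor I₁ I₂ I₃) :
    tinner G H = minner (unfold1 G) (unfold1 H) :=
  (minner_unfold1 G (unfold1 H)).symm

lemma unfold1_tucker (G : Tensor d₁ d₂ d₃) (U : Matrix (Fin I₁) (Fin d₁) ℝ)
    (V : Matrix (Fin I₂) (Fin d₂) ℝ) (W : Matrix (Fin I₃) (Fin d₃) ℝ) :
    unfold1 (tucker G U V W) = U * unfold1 G * (W ⊗ₖ V)ᵀ := by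
  ext i ⟨k, j⟩
  simp only [unfold1, tucker, mode1, mode2, mode3, mul_apply, transpose_apply, kroneckerMap_apply,
    Fintype.sum_prod_type, Finset.sum_mul]
  ac_rfl

lemma tinner_tucker (X : Tensor I₁ I₂ I₃) (G : Tensor d₁ d₂ d₃)
    (U : Matrix (Fin I₁) (Fin d₁) ℝ) (V : Matrix (Fin I₂) (Fin d₂) ℝ)
    (W : Matrix (Fin I₃) (Fin d₃) ℝ) :
    tinner X (tucker G U V W) = tinner (tucker X Uᵀ Vᵀ Wᵀ) G := by
  rw [tinner_eq_minner_unfold1, tinner_eq_minner_unfold1, unfold1_tucker, unfold1_tucker,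
    minner_mul_right, minner_mul_left, kroneckerMap_transpose, transpose_transpose,
    Matrix.mul_assoc]

lemma frobSq_tucker (G : Tensor d₁ d₂ d₃) {U : Matrix (Fin I₁) (Fin d₁) ℝ}
    {V : Matrix (Fin I₂) (Fin d₂) ℝ} {W : Matrix (Fin I₃) (Fin d₃) ℝ}
    (hU : Uᵀ * U = 1) (hV : Vᵀ * V = 1) (hW : Wᵀ * W = 1) :
    frobSq (tucker G U V W) = frobSq G := by
  have hWV : (W ⊗ₖ V)ᵀ * (W ⊗ₖ V) = 1 := by
    rw [kronecker_transpose_mul_kronecker, hW, hV, one_kronecker_one]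
  rw [← frobSq_unfold1, ← frobSq_unfold1, MatrixAux.frobSq_eq_minner, MatrixAux.frobSq_eq_minner,
    unfold1_tucker, minner_mul_right, minner_mul_left, transpose_transpose, Matrix.mul_assoc,
    Matrix.mul_assoc, hWV, Matrix.mul_one, ← Matrix.mul_assoc, hU, Matrix.one_mul]

lemma quadratic_eq_frobSq_sub_add {α : ℝ} (hα : α ≠ 0) (G M : Tensor I₁ I₂ I₃) (c : ℝ) :
    α / 2 * frobSq G - tinner G M + c
      = α / 2 * frobSq (G - (1 / α) • M) + (c - 1 / (2 * α) * frobSq M) := by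
  rw [frobSq_sub, frobSq_smul, tinner_smul_right]
  field_simp
  ring

lemma tucker_objective_eq_quadratic (ρ : ℝ) (X : Tensor I₁ I₂ I₃)
    (C₁ : Matrix (Fin d₁) (Fin d₃ × Fin d₂) ℝ) (C₂ : Matrix (Fin d₂) (Fin d₃ × Fin d₁) ℝ)
    (C₃ : Matrix (Fin d₃) (Fin d₂ × Fin d₁) ℝ) (G : Tensor d₁ d₂ d₃)
    {U : Matrix (Fin I₁) (Fin d₁) ℝ} {V : Matrix (Fin I₂) (Fin d₂) ℝ}
    {W : Matrix (Fin I₃) (Fin d₃) ℝ} (hU : Uᵀ * U = 1) (hV : Vᵀ * V = 1) (hW : Wᵀ * W = 1) :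
    ρ / 2 * (MatrixAux.frobSq (unfold1 G - C₁) + MatrixAux.frobSq (unfold2 G - C₂)
        + MatrixAux.frobSq (unfold3 G - C₃)) + 1 / 2 * frobSq (X - tucker G U V W)
      = (1 + 3 * ρ) / 2 * frobSq G
        - tinner G (tucker X Uᵀ Vᵀ Wᵀ + ρ • (refold1 C₁ + refold2 C₂ + refold3 C₃))
        + (1 / 2 * frobSq X
          + ρ / 2 * (MatrixAux.frobSq C₁ + MatrixAux.frobSq C₂ + MatrixAux.frobSq C₃)) := by
  rw [MatrixAux.frobSq_sub, MatrixAux.frobSq_sub, MatrixAux.frobSq_sub, frobSq_unfold1,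
    frobSq_unfold2, frobSq_unfold3, minner_unfold1, minner_unfold2, minner_unfold3, frobSq_sub,
    frobSq_tucker G hU hV hW, tinner_tucker, tinner_comm _ G, tinner_add_right, tinner_smul_right,
    tinner_add_right, tinner_add_right]
  ring

end Tensor

/-- For every column-orthonormal `U, V, W`,
`min_G f(G,U,V,W) = c₁ − (1/(2(1+3ρ)))‖A + ρB‖²_F` with the constant
`c₁ = (1/2)‖X‖²_F + (ρ/2)∑ₙ‖Cₙ‖²_F` independent of `(U,V,W)`; consequently minimizing `f` is
equivalent to maximizing `g(U,V,W) = ‖A + ρB‖²_F` over column-orthonormal `(U,V,W)`. -/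
theorem min_core_value_eq {I₁ I₂ I₃ d₁ d₂ d₃ : ℕ} (ρ : ℝ) (hρ : 0 < ρ)
    (X : Tensor I₁ I₂ I₃)
    (C₁ : Matrix (Fin d₁) (Fin d₃ × Fin d₂) ℝ)
    (C₂ : Matrix (Fin d₂) (Fin d₃ × Fin d₁) ℝ)
    (C₃ : Matrix (Fin d₃) (Fin d₂ × Fin d₁) ℝ) :
    let f : Tensor d₁ d₂ d₃ → Matrix (Fin I₁) (Fin d₁) ℝ → Matrix (Fin I₂) (Fin d₂) ℝ →
        Matrix (Fin I₃) (Fin d₃) ℝ → ℝ := fun G U V W =>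
      ρ / 2 * (MatrixAux.frobSq (Tensor.unfold1 G - C₁)
          + MatrixAux.frobSq (Tensor.unfold2 G - C₂)
          + MatrixAux.frobSq (Tensor.unfold3 G - C₃))
        + 1 / 2 * Tensor.frobSq (X - Tensor.tucker G U V W)
    let B : Tensor d₁ d₂ d₃ := Tensor.refold1 C₁ + Tensor.refold2 C₂ + Tensor.refold3 C₃
    let A : Matrix (Fin I₁) (Fin d₁) ℝ → Matrix (Fin I₂) (Fin d₂) ℝ →
        Matrix (Fin I₃) (Fin d₃) ℝ → Tensor d₁ d₂ d₃ := fun U V W => Tensor.tucker X Uᵀ Vᵀ Wᵀ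
    let Gstar : Matrix (Fin I₁) (Fin d₁) ℝ → Matrix (Fin I₂) (Fin d₂) ℝ →
        Matrix (Fin I₃) (Fin d₃) ℝ → Tensor d₁ d₂ d₃ := fun U V W =>
      (1 / (1 + 3 * ρ)) • (A U V W + ρ • B)
    let g : Matrix (Fin I₁) (Fin d₁) ℝ → Matrix (Fin I₂) (Fin d₂) ℝ →
        Matrix (Fin I₃) (Fin d₃) ℝ → ℝ := fun U V W => Tensor.frobSq (A U V W + ρ • B)
    let c₁ : ℝ := 1 / 2 * Tensor.frobSq X
      + ρ / 2 * (MatrixAux.frobSq C₁ + MatrixAux.frobSq C₂ + MatrixAux.frobSq C₃)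
    ∀ (U : Matrix (Fin I₁) (Fin d₁) ℝ) (V : Matrix (Fin I₂) (Fin d₂) ℝ)
      (W : Matrix (Fin I₃) (Fin d₃) ℝ), Uᵀ * U = 1 → Vᵀ * V = 1 → Wᵀ * W = 1 →
      (∀ G, f (Gstar U V W) U V W ≤ f G U V W) ∧
      f (Gstar U V W) U V W = c₁ - 1 / (2 * (1 + 3 * ρ)) * g U V W ∧
      ∀ (U' : Matrix (Fin I₁) (Fin d₁) ℝ) (V' : Matrix (Fin I₂) (Fin d₂) ℝ)
        (W' : Matrix (Fin I₃) (Fin d₃) ℝ), U'ᵀ * U' = 1 → V'ᵀ * V' = 1 → W'ᵀ * W' = 1 →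
        (f (Gstar U V W) U V W ≤ f (Gstar U' V' W') U' V' W' ↔ g U' V' W' ≤ g U V W) := by
  intro f B A Gstar g c₁ U V W hU hV hW
  have hα : 0 < 1 + 3 * ρ := by linarith
  have hf : ∀ (U : Matrix (Fin I₁) (Fin d₁) ℝ) (V : Matrix (Fin I₂) (Fin d₂) ℝ)
      (W : Matrix (Fin I₃) (Fin d₃) ℝ), Uᵀ * U = 1 → Vᵀ * V = 1 → Wᵀ * W = 1 → ∀ G,
      f G U V W = (1 + 3 * ρ) / 2 * Tensor.frobSq (G - Gstar U V W)
        + (c₁ - 1 / (2 * (1 + 3 * ρ)) * g U V W) := fun U V W hU hV hW G =>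
    (Tensor.tucker_objective_eq_quadratic ρ X C₁ C₂ C₃ G hU hV hW).trans
      (Tensor.quadratic_eq_frobSq_sub_add hα.ne' G _ c₁)
  have hmin : ∀ (U : Matrix (Fin I₁) (Fin d₁) ℝ) (V : Matrix (Fin I₂) (Fin d₂) ℝ)
      (W : Matrix (Fin I₃) (Fin d₃) ℝ), Uᵀ * U = 1 → Vᵀ * V = 1 → Wᵀ * W = 1 →
      f (Gstar U V W) U V W = c₁ - 1 / (2 * (1 + 3 * ρ)) * g U V W := fun U V W hU hV hW => by
    simp [hf U V W hU hV hW, Tensor.frobSq]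
  refine ⟨fun G => ?_, hmin U V W hU hV hW, fun U' V' W' hU' hV' hW' => ?_⟩
  · rw [hmin U V W hU hV hW, hf U V W hU hV hW G]
    exact le_add_of_nonneg_left (mul_nonneg (by positivity) (Tensor.frobSq_nonneg _))
  · rw [hmin U V W hU hV hW, hmin U' V' W' hU' hV' hW', sub_le_sub_iff_left,
      mul_le_mul_iff_right₀ (by positivity)]
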